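/- Let G be a numerical semigroup minimally generated by n₁ < ⋯ < n_d. Define s = max{ord_G(w) : w ∈ Ap(G, n₁)}. Then s = min{k ∈ ℕ₀ : for every z ∈ G with ord_G(z) ≥ k + 1, one has z − n₁ ∈ G}. (This is the statement that the index of nilpotency of the maximal ideal with respect to the principal reduction (t^{n₁}) equals the maximal order on the Apéry set.) -/

import Mathlib

/-! Since the generators are positive, every element `z` of `G` has finite order `ord_G z ≤ z`.
An element of order at least `s + 1` therefore lies outside the Apéry set, i.e. `z - n₁ ∈ G`;
conversely an Apéry element of order `s` shows that no `k < s` has this property. -/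

/-- The numerical semigroup generated by `n 0, …, n (d-1)`. -/
def semigroupGen (d : ℕ) (n : Fin d → ℕ) : Set ℕ :=
  {z | ∃ a : Fin d → ℕ, ∑ i, a i * n i = z}

/-- The set of lengths `∑ aᵢ` of representations `z = ∑ aᵢ nᵢ`. -/
def repLengths (d : ℕ) (n : Fin d → ℕ) (z : ℕ) : Set ℕ :=
  {s | ∃ a : Fin d → ℕ, (∑ i, a i * n i = z) ∧ (∑ i, a i = s)}

/-- The given generators are a minimal generating system. -/
def MinimallyGenerated (d : ℕ) (n : Fin d → ℕ) : Prop :=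
  ∀ i : Fin d, ¬ ∃ a : Fin d → ℕ, a i = 0 ∧ ∑ j, a j * n j = n i

/-- The Apéry set of the semigroup with respect to `e`. -/
def aperySet (d : ℕ) (n : Fin d → ℕ) (e : ℕ) : Set ℕ :=
  {x | x ∈ semigroupGen d n ∧ ¬ ∃ y ∈ semigroupGen d n, y + e = x}

section Order

variable {d : ℕ} {n : Fin d → ℕ}

lemma repLengths_bddAbove (hpos : ∀ i, 0 < n i) (z : ℕ) : BddAbove (repLengths d n z) := by
  refine ⟨z, ?_⟩
  rintro _ ⟨a, rfl, rfl⟩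
  exact Finset.sum_le_sum fun i _ => Nat.le_mul_of_pos_right _ (hpos i)

lemma exists_isGreatest_repLengths (hpos : ∀ i, 0 < n i) {z : ℕ} {a : Fin d → ℕ}
    (ha : ∑ i, a i * n i = z) : ∃ m, IsGreatest (repLengths d n z) m :=
  (repLengths_bddAbove hpos z).exists_isGreatest_of_nonempty ⟨_, a, ha, rfl⟩

end Order

theorem stmt_9 (d : ℕ) (hd : 0 < d) (n : Fin d → ℕ)
    (hpos : ∀ i, 0 < n i)
    (s : ℕ)
    (hs : IsGreatest {s' | ∃ w ∈ aperySet d n (n ⟨0, hd⟩),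
            IsGreatest (repLengths d n w) s'} s) :
    IsLeast {k : ℕ | ∀ z ∈ semigroupGen d n, ∀ a : Fin d → ℕ,
        (∑ i, a i * n i = z) → k + 1 ≤ ∑ i, a i →
        ∃ y ∈ semigroupGen d n, y + n ⟨0, hd⟩ = z} s := by
  constructor
  · intro z hz a ha hlen
    by_contra hapery
    obtain ⟨m, hm⟩ := exists_isGreatest_repLengths hpos ha
    have hm_le : m ≤ s := hs.2 ⟨z, ⟨hz, hapery⟩, hm⟩
    have hlen_le : ∑ i, a i ≤ m := hm.2 ⟨a, ha, rfl⟩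
    omega
  · intro k hk
    by_contra! hks
    obtain ⟨w, ⟨hw, hw_apery⟩, ⟨a, ha, hlen⟩, -⟩ := hs.1
    exact hw_apery (hk w hw a ha (by omega))
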